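/- Euler's constant γ satisfies Vacca's series: γ = Σ_{n=1}^∞ (-1)^n ⌊log₂ n⌋ / n, where the series converges. -/

import Mathlib

/-!
On the dyadic block `2 ^ M ≤ n < 2 ^ (M + 1)` the weight `⌊log₂ n⌋` is the constant `M`, so the
partial sums of Vacca's series are `∑ₖ k · (A (2 ^ (k + 1)) - A (2 ^ k))`, where `A` are the partial
sums of `∑ (-1) ^ n / n`. Since `A (2m + 1) = H m - H (2m)` with `H` the harmonic numbers, this
telescopes at `n = 2 ^ (M + 1)` to `(M + 1) H (2 ^ M) - M H (2 ^ (M + 1)) - (M + 2) / 2 ^ (M + 1)`,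
and `H n = log n + γ + O(1 / n)` makes the `log 2` terms cancel, leaving `γ + O(M / 2 ^ M)`. Inside
a block the partial sum moves by `M` times a tail of an alternating series whose first term is
`1 / 2 ^ M`, again `O(M / 2 ^ M)`.
-/

open Real Filter Finset Topology

theorem floor_log_div_log_natCast (b n : ℕ) : ⌊Real.log n / Real.log b⌋ = Nat.log b n := by
  rw [Real.log_div_log, Real.floor_logb_natCast n.cast_nonneg, Int.log_natCast]

theorem Nat.tendsto_log_atTop {b : ℕ} (hb : 1 < b) : Tendsto (Nat.log b) atTop atTop :=
  tendsto_atTop_atTop.2 fun M => ⟨b ^ M, fun _ => Nat.le_log_of_pow_le hb⟩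

theorem tendsto_natCast_div_two_pow : Tendsto (fun n : ℕ => (n : ℝ) / 2 ^ n) atTop (𝓝 0) := by
  simpa only [pow_one] using tendsto_pow_const_div_const_pow_of_one_lt 1 one_lt_two

theorem sum_range_neg_one_pow_mul_mem_Icc {R : Type*} [CommRing R] [LinearOrder R]
    [IsStrictOrderedRing R] {f : ℕ → R} (hf : Antitone f) (hf0 : ∀ i, 0 ≤ f i) (n : ℕ) :
    ∑ i ∈ range n, (-1) ^ i * f i ∈ Set.Icc 0 (f 0) := by
  induction n generalizing f with
  | zero => simpa using hf0 0
  | succ n ih =>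
    obtain ⟨h0, h1⟩ := ih (f := fun i => f (i + 1)) (hf.comp_monotone add_left_mono) fun i => hf0 _
    rw [zero_add] at h1
    rw [sum_range_succ', pow_zero, one_mul]
    simp only [pow_succ, mul_neg_one, neg_mul, sum_neg_distrib]
    constructor <;> linarith [hf zero_le_one, hf0 0]

theorem abs_harmonic_sub_log_sub_eulerMascheroniConstant_le {n : ℕ} (hn : n ≠ 0) :
    |harmonic n - log n - eulerMascheroniConstant| ≤ 1 / n := by
  have hlower := eulerMascheroniSeq_lt_eulerMascheroniConstant n
  have hupper := eulerMascheroniConstant_lt_eulerMascheroniSeq' n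
  rw [eulerMascheroniSeq] at hlower
  rw [eulerMascheroniSeq', if_neg hn] at hupper
  have hn' : (0 : ℝ) < n := by positivity
  have hlog : log (n + 1) - log n ≤ 1 / n := by
    rw [← log_div (by positivity) hn'.ne']
    have := log_le_sub_one_of_pos (show (0 : ℝ) < (n + 1) / n by positivity)
    rw [add_div, div_self hn'.ne'] at this ⊢
    linarith
  rw [abs_le]
  constructor <;> linarith

-- The `k = 0` terms vanish (`x / 0 = 0`), so both are sums over `1 ≤ k < n`.
noncomputable def altHarmonic (n : ℕ) : ℝ := ∑ k ∈ range n, (-1) ^ k / k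

noncomputable def vaccaSum (n : ℕ) : ℝ := ∑ k ∈ range n, Nat.log 2 k * ((-1) ^ k / k)

theorem altHarmonic_two_mul_add_one (m : ℕ) :
    altHarmonic (2 * m + 1) = harmonic m - harmonic (2 * m) := by
  induction m with
  | zero => simp [altHarmonic]
  | succ m ih =>
    rw [show 2 * (m + 1) + 1 = 2 * m + 1 + 1 + 1 by ring, altHarmonic, sum_range_succ,
      sum_range_succ, ← altHarmonic, ih, show 2 * (m + 1) = 2 * m + 1 + 1 by ring,
      harmonic_succ, harmonic_succ, harmonic_succ]
    simp only [pow_succ, pow_mul]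
    push_cast
    field_simp
    ring

theorem altHarmonic_two_pow_succ (j : ℕ) :
    altHarmonic (2 ^ (j + 1)) = harmonic (2 ^ j) - harmonic (2 ^ (j + 1)) - 1 / 2 ^ (j + 1) := by
  have h := altHarmonic_two_mul_add_one (2 ^ j)
  rw [← pow_succ', altHarmonic, sum_range_succ, ← altHarmonic,
    (Nat.even_pow.2 ⟨even_two, j.succ_ne_zero⟩).neg_one_pow] at h
  push_cast at h ⊢
  linarith

theorem altHarmonic_sub_mem_Icc {a n : ℕ} (ha : Even a) (ha0 : a ≠ 0) (h : a ≤ n) :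
    altHarmonic n - altHarmonic a ∈ Set.Icc 0 (1 / a : ℝ) := by
  have hf : Antitone fun i : ℕ => 1 / (a + i : ℝ) := fun i j hij => by
    dsimp only
    gcongr
  have key := sum_range_neg_one_pow_mul_mem_Icc hf (fun i => by positivity) (n - a)
  rw [Nat.cast_zero, add_zero] at key
  rw [altHarmonic, altHarmonic, ← sum_Ico_eq_sub _ h, sum_Ico_eq_sum_range]
  convert key using 2 with i
  push_cast
  rw [pow_add, ha.neg_one_pow, one_mul, mul_one_div]

theorem vaccaSum_eq_add_of_two_pow_le {M n : ℕ} (h₁ : 2 ^ M ≤ n) (h₂ : n ≤ 2 ^ (M + 1)) :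
    vaccaSum n = vaccaSum (2 ^ M) + M * (altHarmonic n - altHarmonic (2 ^ M)) := by
  rw [vaccaSum, vaccaSum, altHarmonic, altHarmonic, ← sum_range_add_sum_Ico _ h₁,
    ← sum_Ico_eq_sub _ h₁, mul_sum]
  congr 1
  refine sum_congr rfl fun k hk => ?_
  rw [mem_Ico] at hk
  rw [Nat.log_eq_of_pow_le_of_lt_pow hk.1 (hk.2.trans_le h₂)]

theorem vaccaSum_two_pow_succ (M : ℕ) :
    vaccaSum (2 ^ (M + 1)) =
      (M + 1) * harmonic (2 ^ M) - M * harmonic (2 ^ (M + 1)) - (M + 2) / 2 ^ (M + 1) := by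
  induction M with
  | zero => norm_num [vaccaSum, sum_range_succ, harmonic_succ]
  | succ M ih =>
    rw [vaccaSum_eq_add_of_two_pow_le (pow_le_pow_right₀ one_le_two M.succ.le_succ) le_rfl, ih,
      altHarmonic_two_pow_succ, altHarmonic_two_pow_succ]
    push_cast
    ring

theorem abs_vaccaSum_two_pow_sub_le {M : ℕ} (hM : M ≠ 0) :
    |vaccaSum (2 ^ M) - eulerMascheroniConstant| ≤ 4 * (M / 2 ^ M) := by
  obtain ⟨m, rfl⟩ := Nat.exists_eq_succ_of_ne_zero hM
  have herr (k : ℕ) : |harmonic (2 ^ k) - k * log 2 - eulerMascheroniConstant| ≤ 1 / 2 ^ k := by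
    simpa [Real.log_pow] using
      abs_harmonic_sub_log_sub_eulerMascheroniConstant_le (pow_ne_zero k two_ne_zero)
  have h₀ := abs_le.1 (herr m)
  have h₁ := abs_le.1 (herr (m + 1))
  set x : ℝ := 1 / 2 ^ (m + 1)
  have hdiv (a : ℝ) : a / 2 ^ (m + 1) = a * x := div_eq_mul_one_div a _
  have hhalf : (1 : ℝ) / 2 ^ m = 2 * x := by
    rw [← hdiv, pow_succ]
    field_simp
  rw [hhalf] at h₀
  rw [vaccaSum_two_pow_succ, abs_le]
  push_cast at *
  simp only [hdiv]
  have hm : (0 : ℝ) ≤ m := m.cast_nonneg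
  constructor <;> linarith [mul_le_mul_of_nonneg_left h₀.1 hm, mul_le_mul_of_nonneg_left h₀.2 hm,
    mul_le_mul_of_nonneg_left h₁.1 hm, mul_le_mul_of_nonneg_left h₁.2 hm]

theorem tendsto_vaccaSum_two_pow :
    Tendsto (fun M => vaccaSum (2 ^ M)) atTop (𝓝 eulerMascheroniConstant) := by
  rw [← tendsto_sub_nhds_zero_iff]
  refine squeeze_zero_norm' ?_ (by simpa using tendsto_natCast_div_two_pow.const_mul 4)
  filter_upwards [eventually_ne_atTop 0] with M hM
  exact abs_vaccaSum_two_pow_sub_le hM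

theorem abs_vaccaSum_succ_sub_le {n : ℕ} (hn : 2 ≤ n) :
    |vaccaSum (n + 1) - vaccaSum (2 ^ Nat.log 2 n)| ≤ Nat.log 2 n / 2 ^ Nat.log 2 n := by
  set M := Nat.log 2 n
  have hM : M ≠ 0 := (Nat.log_pos one_lt_two hn).ne'
  have hle : 2 ^ M ≤ n := Nat.pow_log_le_self 2 (by omega)
  have hlt : n < 2 ^ (M + 1) := Nat.lt_pow_succ_log_self one_lt_two n
  obtain ⟨h0, h1⟩ := altHarmonic_sub_mem_Icc (Nat.even_pow.2 ⟨even_two, hM⟩)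
    (pow_ne_zero M two_ne_zero) (hle.trans n.le_succ)
  rw [vaccaSum_eq_add_of_two_pow_le (hle.trans n.le_succ) hlt, add_sub_cancel_left,
    abs_of_nonneg (by positivity), div_eq_mul_one_div]
  push_cast at h1
  gcongr

/-- Vacca's series: `γ = ∑_{n=1}^∞ (-1)^n ⌊log₂ n⌋ / n`. -/
theorem gamma_eq_vacca_series :
    Tendsto (fun N : ℕ => ∑ n ∈ Finset.Icc 1 N,
        (-1 : ℝ) ^ n * (⌊Real.log n / Real.log 2⌋ : ℝ) / n)
      atTop (nhds Real.eulerMascheroniConstant) := by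
  have hfloor (n : ℕ) : (⌊Real.log n / Real.log 2⌋ : ℝ) = Nat.log 2 n := by
    exact_mod_cast floor_log_div_log_natCast 2 n
  have hsum (N : ℕ) : ∑ n ∈ Icc 1 N, (-1 : ℝ) ^ n * (⌊Real.log n / Real.log 2⌋ : ℝ) / n =
      vaccaSum (N + 1) := by
    rw [vaccaSum, range_eq_Ico, sum_eq_sum_Ico_succ_bot (by omega : 0 < N + 1), zero_add,
      Ico_add_one_right_eq_Icc]
    simp only [hfloor, CharP.cast_eq_zero, div_zero, mul_zero, zero_add]
    exact sum_congr rfl fun n _ => by ring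
  simp_rw [hsum]
  have hlog := Nat.tendsto_log_atTop one_lt_two
  have hgap : Tendsto (fun n => vaccaSum (n + 1) - vaccaSum (2 ^ Nat.log 2 n)) atTop (𝓝 0) :=
    squeeze_zero_norm' (eventually_atTop.2 ⟨2, fun _ => abs_vaccaSum_succ_sub_le⟩)
      (tendsto_natCast_div_two_pow.comp hlog)
  simpa using (tendsto_vaccaSum_two_pow.comp hlog).add hgap
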